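/- Every path P = v₁…vₙ with an odd number of edges ‖P‖ ≥ 5 admits a proper orientation with maximum in-degree at most 2 such that d⁻(v₁)=0, d⁻(v₂)=1, d⁻(v_{n−2})=0, d⁻(v_{n−1})=2, and d⁻(vₙ)=0. -/
import Mathlib


open SimpleGraph

/-- `D` is an orientation of `G`: each edge gets exactly one direction. -/
def IsOrientation {V : Type*} (G : SimpleGraph V) (D : V → V → Prop) : Prop :=
  (∀ u v, G.Adj u v ↔ (D u v ∨ D v u)) ∧ ∀ u v, ¬(D u v ∧ D v u)

/-- In-degree of `v` in the orientation `D`. -/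
noncomputable def inDeg {V : Type*} (D : V → V → Prop) (v : V) : ℕ :=
  Nat.card {u : V // D u v}

/-- An orientation is proper if adjacent vertices have distinct in-degrees. -/
def IsProper {V : Type*} (G : SimpleGraph V) (D : V → V → Prop) : Prop :=
  ∀ u v, G.Adj u v → inDeg D u ≠ inDeg D v

lemma inDeg_eq_zero {V : Type*} (D : V → V → Prop) {v : V}
    (h : ∀ u, ¬ D u v) : inDeg D v = 0 := by
  have : IsEmpty {u : V // D u v} := ⟨fun x => h x.1 x.2⟩
  simp only [inDeg]
  exact Nat.card_of_isEmpty

lemma inDeg_eq_one {V : Type*} (D : V → V → Prop) {v a : V}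
    (ha : D a v) (h : ∀ u, D u v → u = a) : inDeg D v = 1 := by
  have : Unique {u : V // D u v} :=
    ⟨⟨⟨a, ha⟩⟩, fun x => Subtype.ext (h x.1 x.2)⟩
  simp [inDeg, Nat.card_unique]

lemma inDeg_eq_two {V : Type*} [DecidableEq V] (D : V → V → Prop) {v a b : V}
    (ha : D a v) (hb : D b v) (hab : a ≠ b)
    (h : ∀ u, D u v → u = a ∨ u = b) : inDeg D v = 2 := by
  have e : {u : V // D u v} ≃ Bool :=
    { toFun := fun x => decide (x.1 = a)
      invFun := fun c => if c then ⟨a, ha⟩ else ⟨b, hb⟩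
      left_inv := fun x => by
        rcases h x.1 x.2 with h1 | h1 <;>
          simp only [h1, decide_eq_true_eq, if_pos, hab.symm, decide_eq_false_iff_not,
            if_neg, if_true, if_false, Ne.symm hab, not_false_iff] <;>
          exact Subtype.ext h1.symm
      right_inv := fun c => by
        cases c <;> simp [hab, Ne.symm hab] }
  rw [inDeg, Nat.card_congr e, Nat.card_eq_fintype_card]
  simp

/-- Edge `i -- i+1` is directed `i → i+1` iff `i ≤ 1` or `i` is odd. -/
def pathDir (n : ℕ) : Fin n → Fin n → Prop := fun u v =>
  (u.val + 1 = v.val ∧ (u.val ≤ 1 ∨ u.val % 2 = 1)) ∨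
  (v.val + 1 = u.val ∧ ¬ (v.val ≤ 1 ∨ v.val % 2 = 1))

lemma pathDir_inDeg (n : ℕ) (hn6 : 6 ≤ n) (hne : n % 2 = 0) (v : Fin n) :
    inDeg (pathDir n) v =
      if v.val = 0 then 0 else if v.val = 1 then 1 else if v.val % 2 = 1 then 0 else 2 := by
  have hv := v.isLt
  by_cases h0 : v.val = 0
  · rw [if_pos h0]
    apply inDeg_eq_zero
    rintro u (⟨h, hr⟩ | ⟨h, hr⟩) <;> omega
  rw [if_neg h0]
  by_cases h1 : v.val = 1
  · rw [if_pos h1]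
    apply inDeg_eq_one (a := (⟨0, by omega⟩ : Fin n))
    · exact Or.inl ⟨show 0 + 1 = v.val by omega, Or.inl (show (0:ℕ) ≤ 1 by omega)⟩
    · rintro u (⟨h, hr⟩ | ⟨h, hr⟩)
      · exact Fin.ext (show u.val = 0 by omega)
      · exact absurd (Or.inl (by omega)) hr
  rw [if_neg h1]
  by_cases h2 : v.val % 2 = 1
  · rw [if_pos h2]
    apply inDeg_eq_zero
    rintro u (⟨h, hr⟩ | ⟨h, hr⟩) <;> omega
  · rw [if_neg h2]
    apply inDeg_eq_two (a := (⟨v.val - 1, by omega⟩ : Fin n)) (b := (⟨v.val + 1, by omega⟩ : Fin n))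
    · exact Or.inl ⟨show v.val - 1 + 1 = v.val by omega,
        show v.val - 1 ≤ 1 ∨ (v.val - 1) % 2 = 1 by omega⟩
    · exact Or.inr ⟨show v.val + 1 = v.val + 1 from rfl,
        show ¬ (v.val ≤ 1 ∨ v.val % 2 = 1) by omega⟩
    · simp only [ne_eq, Fin.mk.injEq]; omega
    · rintro u (⟨h, hr⟩ | ⟨h, hr⟩)
      · exact Or.inl (Fin.ext (show u.val = v.val - 1 by omega))
      · exact Or.inr (Fin.ext (show u.val = v.val + 1 by omega))

/-- Lemma 5(1): a path with an odd number of edges, at least 5. -/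
theorem path_orientation_odd_01_020 (n : ℕ) (hn : 5 ≤ n - 1) (hodd : Odd (n - 1)) :
    ∃ D : Fin n → Fin n → Prop,
      IsOrientation (SimpleGraph.pathGraph n) D ∧
      IsProper (SimpleGraph.pathGraph n) D ∧
      (∀ v, inDeg D v ≤ 2) ∧
      inDeg D ⟨0, by omega⟩ = 0 ∧ inDeg D ⟨1, by omega⟩ = 1 ∧
      inDeg D ⟨n - 3, by omega⟩ = 0 ∧ inDeg D ⟨n - 2, by omega⟩ = 2 ∧
      inDeg D ⟨n - 1, by omega⟩ = 0 := by
  obtain ⟨k, hk⟩ := hodd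
  have hn6 : 6 ≤ n := by omega
  have hne : n % 2 = 0 := by omega
  have key := pathDir_inDeg n hn6 hne
  refine ⟨pathDir n, ⟨?_, ?_⟩, ?_, ?_, ?_, ?_, ?_, ?_, ?_⟩
  · intro u v
    rw [pathGraph_adj]
    constructor
    · rintro (h | h)
      · by_cases hr : (u.val ≤ 1 ∨ u.val % 2 = 1)
        · exact Or.inl (Or.inl ⟨h, hr⟩)
        · exact Or.inr (Or.inr ⟨h, hr⟩)
      · by_cases hr : (v.val ≤ 1 ∨ v.val % 2 = 1)
        · exact Or.inr (Or.inl ⟨h, hr⟩)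
        · exact Or.inl (Or.inr ⟨h, hr⟩)
    · rintro ((⟨h, -⟩ | ⟨h, -⟩) | (⟨h, -⟩ | ⟨h, -⟩)) <;> omega
  · rintro u v ⟨(⟨h1, h1'⟩ | ⟨h1, h1'⟩), (⟨h2, h2'⟩ | ⟨h2, h2'⟩)⟩ <;> omega
  · intro u v hadj
    rw [pathGraph_adj] at hadj
    rw [key u, key v]
    split_ifs <;> omega
  · intro v
    rw [key v]
    split_ifs <;> omega
  all_goals
    rw [key]
    rw [show ∀ (m : ℕ) (h : m < n), ((⟨m, h⟩ : Fin n) : ℕ) = m from fun _ _ => rfl]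
    split_ifs <;> first | omega | trivial
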